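/- For all 0 ≤ k ≤ n, 2·D(n,k) = B(n,k) + (−1)^k·C(n,k) and 2·D̃(n,k) = B(n,k) − (−1)^k·C(n,k), where C(n,k) is the binomial coefficient. -/

import Mathlib

open MeasureTheory Finset

/-- Number of descents of a finite sequence given as a list. -/
def descCount {α : Type*} [LT α] [DecidableRel ((· < ·) : α → α → Prop)] : List α → ℕ
  | a :: b :: rest => (if b < a then 1 else 0) + descCount (b :: rest)
  | _ => 0

/-- Type A Eulerian number: permutations of {1,…,n} with k descents. -/
def eulerianA (n k : ℕ) : ℕ :=
  Fintype.card {σ : Equiv.Perm (Fin n) // descCount (List.ofFn fun i => σ i) = k}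

/-- Eulerian polynomial of type A. -/
noncomputable def polyA (n : ℕ) (t : ℝ) : ℝ :=
  ∑ k ∈ Finset.range (n + 1), (eulerianA n k : ℝ) * t ^ k

/-- The underlying set {-n, …, -1, 0, 1, …, n}. -/
abbrev BSet (n : ℕ) : Type := {x : ℤ // x ∈ Finset.Icc (-(n : ℤ)) (n : ℤ)}

def negB {n : ℕ} (x : BSet n) : BSet n :=
  ⟨-x.1, by have := x.2; simp only [Finset.mem_Icc] at *; omega⟩

def posB {n : ℕ} (i : Fin n) : BSet n :=
  ⟨((i : ℕ) : ℤ) + 1, by have := i.isLt; simp only [Finset.mem_Icc]; omega⟩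

/-- A permutation of {-n,…,n} is a signed permutation if σ(-k) = -σ(k). -/
def IsSigned {n : ℕ} (σ : Equiv.Perm (BSet n)) : Prop :=
  ∀ x : BSet n, (σ (negB x)).1 = -((σ x).1)

noncomputable instance {n : ℕ} (σ : Equiv.Perm (BSet n)) : Decidable (IsSigned σ) :=
  inferInstanceAs (Decidable (∀ x : BSet n, (σ (negB x)).1 = -((σ x).1)))

/-- Number of descents of the sequence (0, σ(1), …, σ(n)). -/
def descB {n : ℕ} (σ : Equiv.Perm (BSet n)) : ℕ :=
  descCount ((0 : ℤ) :: List.ofFn fun i : Fin n => (σ (posB i)).1)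

/-- Number of negative terms among σ(1), …, σ(n). -/
def negCount {n : ℕ} (σ : Equiv.Perm (BSet n)) : ℕ :=
  (Finset.univ.filter fun i : Fin n => (σ (posB i)).1 < 0).card

/-- Type B Eulerian number. -/
noncomputable def eulerianB (n k : ℕ) : ℕ :=
  Fintype.card {σ : Equiv.Perm (BSet n) // IsSigned σ ∧ descB σ = k}

/-- Primary type D Eulerian number. -/
noncomputable def eulerianD (n k : ℕ) : ℕ :=
  Fintype.card {σ : Equiv.Perm (BSet n) //
    (IsSigned σ ∧ Even (negCount σ)) ∧ descB σ = k}

/-- Complementary type D Eulerian number. -/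
noncomputable def eulerianDt (n k : ℕ) : ℕ :=
  Fintype.card {σ : Equiv.Perm (BSet n) //
    (IsSigned σ ∧ ¬ Even (negCount σ)) ∧ descB σ = k}

noncomputable def polyB (n : ℕ) (t : ℝ) : ℝ :=
  ∑ k ∈ Finset.range (n + 1), (eulerianB n k : ℝ) * t ^ k

noncomputable def polyD (n : ℕ) (t : ℝ) : ℝ :=
  ∑ k ∈ Finset.range (n + 1), (eulerianD n k : ℝ) * t ^ k

noncomputable def polyDt (n : ℕ) (t : ℝ) : ℝ :=
  ∑ k ∈ Finset.range (n + 1), (eulerianDt n k : ℝ) * t ^ k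

open Polynomial

/-!
A signed permutation is a permutation `π` of `Fin n` together with signs `ε`; its one-line
notation is the signed word `(ε i * (π i + 1))ᵢ`. Each signed word of length `n + 1` arises in
exactly one way by inserting `±(n + 1)` into a signed word of length `n`. Inserted anywhere but at
the end (the word being preceded by `0`), either sign creates exactly one new descent, so the two
choices cancel in `∑ (-1)^neg t^des`; appended at the end, `n + 1` creates no descent and
`-(n + 1)` creates one. Hence `D_n(t) - D̃_n(t) = ∑_{σ ∈ B_n} (-1)^neg(σ) t^des(σ) = (1 - t)^n`,
whose coefficient of `t^k` is `(-1)^k C(n, k)`, and `D(n, k) + D̃(n, k) = B(n, k)`.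
-/

section descCount

variable {α : Type*} [LinearOrder α]

@[simp] lemma descCount_singleton (a : α) : descCount [a] = 0 := rfl

@[simp] lemma descCount_cons_cons (a b : α) (l : List α) :
    descCount (a :: b :: l) = (if b < a then 1 else 0) + descCount (b :: l) := rfl

lemma descCount_append_cons (u v : List α) (a : α) :
    descCount (u ++ a :: v) = descCount (u ++ [a]) + descCount (a :: v) := by
  induction u with
  | nil => simp
  | cons x u ih =>
    cases u with
    | nil => simp
    | cons y u => simp only [List.cons_append, descCount_cons_cons] at ih ⊢; omega

lemma descCount_concat_of_forall_lt {u : List α} {a : α} (h : ∀ x ∈ u, x < a) :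
    descCount (u ++ [a]) = descCount u := by
  induction u with
  | nil => rfl
  | cons x u ih =>
    cases u with
    | nil => simp [(h x (by simp)).not_gt]
    | cons y u =>
      simp only [List.cons_append, descCount_cons_cons] at ih ⊢
      rw [ih fun z hz ↦ h z (List.mem_cons_of_mem x hz)]

lemma descCount_concat_of_forall_gt {u : List α} {a : α} (hu : u ≠ []) (h : ∀ x ∈ u, a < x) :
    descCount (u ++ [a]) = descCount u + 1 := by
  induction u with
  | nil => exact absurd rfl hu
  | cons x u ih =>
    cases u with
    | nil => simp [h x (by simp)]
    | cons y u =>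
      simp only [List.cons_append, descCount_cons_cons] at ih ⊢
      rw [ih (List.cons_ne_nil _ _) fun z hz ↦ h z (List.mem_cons_of_mem x hz)]
      omega

lemma descCount_cons_of_forall_lt {v : List α} {a : α} (hv : v ≠ []) (h : ∀ x ∈ v, x < a) :
    descCount (a :: v) = descCount v + 1 := by
  obtain ⟨b, l, rfl⟩ := List.exists_cons_of_ne_nil hv
  simp [h b (by simp), add_comm]

lemma descCount_cons_of_forall_gt {v : List α} {a : α} (h : ∀ x ∈ v, a < x) :
    descCount (a :: v) = descCount v := by
  cases v with
  | nil => rfl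
  | cons b l => simp [(h b (by simp)).not_gt]

lemma descCount_append_cons_of_forall_lt {u v : List α} {a : α} (hv : v ≠ [])
    (h : ∀ x ∈ u ++ v, x < a) : descCount (u ++ a :: v) = descCount u + descCount v + 1 := by
  simp only [List.mem_append] at h
  rw [descCount_append_cons, descCount_concat_of_forall_lt fun x hx ↦ h x (.inl hx),
    descCount_cons_of_forall_lt hv fun x hx ↦ h x (.inr hx), add_assoc]

lemma descCount_append_cons_of_forall_gt {u v : List α} {a : α} (hu : u ≠ [])
    (h : ∀ x ∈ u ++ v, a < x) : descCount (u ++ a :: v) = descCount u + descCount v + 1 := by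
  simp only [List.mem_append] at h
  rw [descCount_append_cons, descCount_concat_of_forall_gt hu fun x hx ↦ h x (.inl hx),
    descCount_cons_of_forall_gt fun x hx ↦ h x (.inr hx)]
  omega

end descCount

lemma List.ofFn_insertNth {β : Type*} {n : ℕ} (j : Fin (n + 1)) (x : β) (f : Fin n → β) :
    List.ofFn (Fin.insertNth j x f) = (List.ofFn f).take j ++ x :: (List.ofFn f).drop j := by
  induction n with
  | zero => simp [Fin.fin_one_eq_zero j]
  | succ n ih =>
    cases j using Fin.cases with
    | zero => simp [List.ofFn_succ]
    | succ j =>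
      rw [← Fin.cons_self_tail f, Fin.insertNth_succ_cons, List.ofFn_cons, List.ofFn_cons, ih]
      simp

lemma Fintype.sum_units_int {M : Type*} [AddCommMonoid M] (f : ℤˣ → M) :
    ∑ u, f u = f 1 + f (-1) :=
  Finset.sum_pair (by decide)

section SignedWords

open Equiv

variable {n : ℕ}

def signedWord (π : Perm (Fin n)) (ε : Fin n → ℤˣ) (i : Fin n) : ℤ :=
  ε i * ((π i : ℕ) + 1)

lemma natAbs_signedWord (π : Perm (Fin n)) (ε : Fin n → ℤˣ) (i : Fin n) :
    (signedWord π ε i).natAbs = (π i : ℕ) + 1 := by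
  rw [signedWord, Int.natAbs_mul, Int.units_natAbs, one_mul]
  omega

lemma abs_lt_of_mem_signedWord {π : Perm (Fin n)} {ε : Fin n → ℤˣ} {x : ℤ}
    (hx : x ∈ List.ofFn (signedWord π ε)) : |x| < n + 1 := by
  obtain ⟨i, rfl⟩ := List.mem_ofFn.mp hx
  have := (π i).isLt
  rw [Int.abs_eq_natAbs, natAbs_signedWord]
  omega

/-- `insertMax j π` is the permutation of `Fin (n + 1)` obtained by inserting the new largest
value `n` at position `j` into the one-line notation of `π`. -/
def insertMax (j : Fin (n + 1)) (π : Perm (Fin n)) : Perm (Fin (n + 1)) :=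
  (finSuccEquiv' j).trans ((optionCongr π).trans (finSuccEquiv' (Fin.last n)).symm)

@[simp] lemma insertMax_apply_self (j : Fin (n + 1)) (π : Perm (Fin n)) :
    insertMax j π j = Fin.last n := by
  simp [insertMax]

@[simp] lemma insertMax_apply_succAbove (j : Fin (n + 1)) (π : Perm (Fin n)) (i : Fin n) :
    insertMax j π (j.succAbove i) = (π i).castSucc := by
  simp [insertMax]

lemma insertMax_bijective :
    Function.Bijective fun p : Fin (n + 1) × Perm (Fin n) ↦ insertMax p.1 p.2 := by
  rw [Fintype.bijective_iff_injective_and_card]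
  refine ⟨?_, by simp [Fintype.card_perm, Nat.factorial_succ]⟩
  rintro ⟨j, π⟩ ⟨j', π'⟩ h
  simp only at h
  obtain rfl : j = j' := (insertMax j π).injective <| by
    rw [insertMax_apply_self, h, insertMax_apply_self]
  refine Prod.ext rfl (Equiv.ext fun i ↦ Fin.castSucc_injective n ?_)
  rw [← insertMax_apply_succAbove, ← insertMax_apply_succAbove, h]

lemma signedWord_insertMax (j : Fin (n + 1)) (π : Perm (Fin n)) (b : ℤˣ) (ε : Fin n → ℤˣ) :
    signedWord (insertMax j π) (Fin.insertNth j b ε) =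
      Fin.insertNth j (b * ((n : ℤ) + 1)) (signedWord π ε) := by
  ext i
  cases i using Fin.succAboveCases j <;> simp [signedWord]

lemma sum_units_X_pow_descCount_insert {w : List ℤ} {M : ℤ} (hM : 0 < M) (hw : ∀ x ∈ w, |x| < M)
    {j : ℕ} (hj : j ≤ w.length) :
    ∑ b : ℤˣ, C (b : ℤ) * X ^ descCount ((0 : ℤ) :: (w.take j ++ (b * M) :: w.drop j)) =
      if j = w.length then (1 - X) * X ^ descCount ((0 : ℤ) :: w) else 0 := by
  have hbound : ∀ x ∈ ((0 : ℤ) :: w.take j) ++ w.drop j, -M < x ∧ x < M := by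
    intro x hx
    rw [List.cons_append, List.take_append_drop] at hx
    rw [← abs_lt]
    rcases List.mem_cons.mp hx with rfl | hx
    exacts [by simpa using hM, hw x hx]
  simp only [Fintype.sum_units_int, Units.val_one, Units.val_neg, one_mul, neg_one_mul,
    ← List.cons_append]
  split_ifs with hjw
  · subst hjw
    rw [List.take_length, List.drop_length] at hbound ⊢
    rw [descCount_concat_of_forall_lt fun x hx ↦ by simpa using (hbound x (by simpa using hx)).2,
      descCount_concat_of_forall_gt (List.cons_ne_nil _ _)
        fun x hx ↦ by simpa using (hbound x (by simpa using hx)).1]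
    simp only [map_one, map_neg, pow_succ]
    ring
  · have hdrop : w.drop j ≠ [] := by simp; omega
    rw [descCount_append_cons_of_forall_lt hdrop fun x hx ↦ by simpa using (hbound x hx).2,
      descCount_append_cons_of_forall_gt (List.cons_ne_nil _ _)
        fun x hx ↦ by simpa using (hbound x hx).1]
    simp

noncomputable def signedDescentTerm (π : Perm (Fin n)) (ε : Fin n → ℤˣ) : ℤ[X] :=
  C (∏ i, (ε i : ℤ)) * X ^ descCount ((0 : ℤ) :: List.ofFn (signedWord π ε))

noncomputable def signedDescentPoly (n : ℕ) : ℤ[X] :=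
  ∑ π : Perm (Fin n), ∑ ε : Fin n → ℤˣ, signedDescentTerm π ε

lemma sum_units_signedDescentTerm_insertMax (j : Fin (n + 1)) (π : Perm (Fin n))
    (ε : Fin n → ℤˣ) :
    ∑ b : ℤˣ, signedDescentTerm (insertMax j π) (Fin.insertNth j b ε) =
      if j = Fin.last n then (1 - X) * signedDescentTerm π ε else 0 := by
  set w := List.ofFn (signedWord π ε)
  have hj : (j : ℕ) ≤ w.length := by simpa [w] using j.is_le
  calc ∑ b : ℤˣ, signedDescentTerm (insertMax j π) (Fin.insertNth j b ε)
      = C (∏ i, (ε i : ℤ)) *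
          ∑ b : ℤˣ, C (b : ℤ) *
            X ^ descCount ((0 : ℤ) :: (w.take j ++ ((b : ℤ) * ((n : ℤ) + 1)) :: w.drop j)) := by
        simp only [signedDescentTerm, signedWord_insertMax, List.ofFn_insertNth,
          Fin.prod_univ_succAbove _ j, Fin.insertNth_apply_same, Fin.insertNth_apply_succAbove,
          C_mul, Finset.mul_sum, w]
        exact Finset.sum_congr rfl fun b _ ↦ by ring
    _ = if j = Fin.last n then (1 - X) * signedDescentTerm π ε else 0 := by
        rw [sum_units_X_pow_descCount_insert (by positivity)
          (fun x hx ↦ abs_lt_of_mem_signedWord hx) hj]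
        simp only [List.length_ofFn, Fin.ext_iff, Fin.val_last, signedDescentTerm]
        split_ifs <;> ring

lemma signedDescentPoly_succ (n : ℕ) :
    signedDescentPoly (n + 1) = (1 - X) * signedDescentPoly n := by
  calc signedDescentPoly (n + 1)
      = ∑ j : Fin (n + 1), ∑ π, ∑ b : ℤˣ, ∑ ε : Fin n → ℤˣ,
          signedDescentTerm (insertMax j π) (Fin.insertNth j b ε) := by
        rw [signedDescentPoly, ← Fintype.sum_bijective _ insertMax_bijective
          (fun p ↦ ∑ ε, signedDescentTerm (insertMax p.1 p.2) ε) _ fun _ ↦ rfl,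
          Fintype.sum_prod_type]
        refine Finset.sum_congr rfl fun j _ ↦ Finset.sum_congr rfl fun π _ ↦ ?_
        rw [← Fintype.sum_prod_type']
        exact (Fintype.sum_equiv (Fin.insertNthEquiv (fun _ ↦ ℤˣ) j) _ _ fun _ ↦ rfl).symm
    _ = (1 - X) * signedDescentPoly n := by
        simp only [Finset.sum_comm (γ := ℤˣ), sum_units_signedDescentTerm_insertMax,
          Finset.sum_ite_irrel, Finset.sum_const_zero, Fintype.sum_ite_eq', signedDescentPoly,
          Finset.mul_sum]

theorem signedDescentPoly_eq (n : ℕ) : signedDescentPoly n = (1 - X) ^ n := by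
  induction n with
  | zero => simp [signedDescentPoly, signedDescentTerm]
  | succ n ih => rw [signedDescentPoly_succ, ih, pow_succ']

end SignedWords

lemma Polynomial.coeff_one_sub_X_pow (n k : ℕ) :
    ((1 - X : ℤ[X]) ^ n).coeff k = (-1) ^ k * n.choose k := by
  have h : (1 - X : ℤ[X]) ^ n = C ((-1) ^ n) * (X + C (-1)) ^ n := by
    rw [map_pow, ← mul_pow]
    congr 1
    simp only [map_neg, map_one]
    ring
  rw [h, coeff_C_mul, coeff_X_add_C_pow]
  rcases le_or_gt k n with hkn | hnk
  · obtain ⟨m, rfl⟩ := Nat.exists_eq_add_of_le hkn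
    rw [Nat.add_sub_cancel_left, pow_add, mul_assoc, ← mul_assoc ((-1) ^ m), ← mul_pow]
    simp
  · simp [Nat.choose_eq_zero_of_lt hnk]

section SignedPerm

open Equiv

variable {α : Type*}

def signFlip : Perm (Option (α × ℤˣ)) :=
  optionCongr (prodCongr (Equiv.refl α) (Equiv.neg ℤˣ))

@[simp] lemma signFlip_none : signFlip (none : Option (α × ℤˣ)) = none := rfl

@[simp] lemma signFlip_some (i : α) (a : ℤˣ) : signFlip (some (i, a)) = some (i, -a) := rfl

def signedPerm (π : Perm α) (ε : α → ℤˣ) : Perm (Option (α × ℤˣ)) :=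
  optionCongr (prodShear π fun i ↦ Equiv.mulLeft (ε i))

@[simp] lemma signedPerm_none (π : Perm α) (ε : α → ℤˣ) : signedPerm π ε none = none := rfl

@[simp] lemma signedPerm_some (π : Perm α) (ε : α → ℤˣ) (i : α) (a : ℤˣ) :
    signedPerm π ε (some (i, a)) = some (π i, ε i * a) := rfl

lemma signedPerm_signFlip (π : Perm α) (ε : α → ℤˣ) (y : Option (α × ℤˣ)) :
    signedPerm π ε (signFlip y) = signFlip (signedPerm π ε y) := by
  rcases y with _ | ⟨i, a⟩ <;> simp

lemma signedPerm_injective :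
    Function.Injective fun p : Perm α × (α → ℤˣ) ↦ signedPerm p.1 p.2 := by
  rintro ⟨π, ε⟩ ⟨π', ε'⟩ h
  have key (i : α) : (π i, ε i) = (π' i, ε' i) := by
    simpa using congrArg (· (some (i, 1))) h
  exact Prod.ext (Equiv.ext fun i ↦ congrArg Prod.fst (key i))
    (funext fun i ↦ congrArg Prod.snd (key i))

lemma eq_none_of_signFlip_eq {y : Option (α × ℤˣ)} (h : signFlip y = y) : y = none := by
  rcases y with _ | ⟨i, a⟩
  · rfl
  · cases Int.units_eq_one_or a <;> simp_all [Units.ext_iff]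

lemma exists_signedPerm_eq [Finite α] {τ : Perm (Option (α × ℤˣ))}
    (hτ : ∀ y, τ (signFlip y) = signFlip (τ y)) : ∃ π ε, signedPerm π ε = τ := by
  have hnone : τ none = none := eq_none_of_signFlip_eq (by rw [← hτ, signFlip_none])
  have hsome (i : α) : ∃ p, τ (some (i, 1)) = some p :=
    Option.ne_none_iff_exists'.mp fun h ↦ by simpa using τ.injective (h.trans hnone.symm)
  choose p hp using hsome
  have hneg (i : α) : τ (some (i, -1)) = some ((p i).1, -(p i).2) := by
    rw [← signFlip_some, hτ, hp, signFlip_some]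
  have hinj : Function.Injective fun i ↦ (p i).1 := by
    intro i j (hij : (p i).1 = (p j).1)
    by_cases hsign : (p i).2 = (p j).2
    · have : τ (some (i, 1)) = τ (some (j, 1)) := by rw [hp, hp, Prod.ext hij hsign]
      simpa using τ.injective this
    · have : τ (some (i, 1)) = τ (some (j, -1)) := by
        rw [hp, hneg, ← hij, ← Int.units_ne_iff_eq_neg.mp hsign]
      simpa using τ.injective this
  refine ⟨Equiv.ofBijective _ (Finite.injective_iff_bijective.mp hinj), fun i ↦ (p i).2, ?_⟩
  ext1 y
  rcases y with _ | ⟨i, a⟩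
  · simp [hnone]
  · rcases Int.units_eq_one_or a with rfl | rfl
    · simp [hp]
    · simp [hneg]

end SignedPerm

section TypeB

open Equiv

variable {n : ℕ}

/-- Through this encoding, signed permutations of `{-n, …, n}` become the permutations of
`Option (Fin n × ℤˣ)` that commute with `signFlip`. -/
def bsetEquiv (n : ℕ) : BSet n ≃ Option (Fin n × ℤˣ) where
  toFun x := if h : x.1 = 0 then none else
    some (⟨x.1.natAbs - 1, by have := Finset.mem_Icc.mp x.2; omega⟩, if x.1 < 0 then -1 else 1)
  invFun y := y.elim ⟨0, by simp⟩ fun p ↦ ⟨p.2 * ((p.1 : ℕ) + 1), by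
    have := p.1.isLt
    rcases Int.units_eq_one_or p.2 with h | h <;>
      simp only [h, Finset.mem_Icc, Units.val_one, Units.val_neg, one_mul, neg_one_mul] <;> omega⟩
  left_inv x := by
    have := Finset.mem_Icc.mp x.2
    by_cases h : x.1 = 0
    · simp [h, Subtype.ext_iff]
    · ext1
      by_cases hneg : x.1 < 0
      · simp [h, hneg, abs_of_neg hneg]
      · simp [h, hneg, abs_of_nonneg (not_lt.mp hneg)]
  right_inv y := by
    rcases y with _ | ⟨i, a⟩
    · simp
    · rcases Int.units_eq_one_or a with rfl | rfl <;> simp [Fin.ext_iff] <;> omega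

lemma bsetEquiv_symm_some_val (i : Fin n) (a : ℤˣ) :
    ((bsetEquiv n).symm (some (i, a))).1 = a * ((i : ℕ) + 1) := rfl

lemma bsetEquiv_posB (i : Fin n) : bsetEquiv n (posB i) = some (i, 1) := by
  rw [← Equiv.eq_symm_apply]
  ext1
  simp [bsetEquiv_symm_some_val, posB]

lemma bsetEquiv_symm_signFlip (y : Option (Fin n × ℤˣ)) :
    (bsetEquiv n).symm (signFlip y) = negB ((bsetEquiv n).symm y) := by
  ext1
  rcases y with _ | ⟨i, a⟩
  · rfl
  · simp [bsetEquiv_symm_some_val, negB]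

lemma bsetEquiv_negB (x : BSet n) : bsetEquiv n (negB x) = signFlip (bsetEquiv n x) := by
  rw [← Equiv.eq_symm_apply, bsetEquiv_symm_signFlip, Equiv.symm_apply_apply]

lemma isSigned_iff_commute_signFlip (σ : Perm (BSet n)) :
    IsSigned σ ↔ ∀ y, (bsetEquiv n).permCongr σ (signFlip y) =
      signFlip ((bsetEquiv n).permCongr σ y) := by
  simp only [Equiv.permCongr_apply, bsetEquiv_symm_signFlip, ← bsetEquiv_negB,
    (bsetEquiv n).apply_eq_iff_eq]
  rw [(bsetEquiv n).symm.forall_congr_right (q := fun x ↦ σ (negB x) = negB (σ x))]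
  simp only [IsSigned, Subtype.ext_iff, negB]

def signedPermB (π : Perm (Fin n)) (ε : Fin n → ℤˣ) : Perm (BSet n) :=
  (bsetEquiv n).symm.permCongr (signedPerm π ε)

lemma signedPermB_posB (π : Perm (Fin n)) (ε : Fin n → ℤˣ) (i : Fin n) :
    (signedPermB π ε (posB i)).1 = signedWord π ε i := by
  simp [signedPermB, bsetEquiv_posB, bsetEquiv_symm_some_val, signedWord]

lemma image_signedPermB :
    Finset.univ.image (fun p : Perm (Fin n) × (Fin n → ℤˣ) ↦ signedPermB p.1 p.2) =
      Finset.univ.filter IsSigned := by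
  ext σ
  simp only [Finset.mem_image, Finset.mem_univ, true_and, Finset.mem_filter, Prod.exists,
    isSigned_iff_commute_signFlip]
  constructor
  · rintro ⟨π, ε, rfl⟩
    simpa [signedPermB] using signedPerm_signFlip π ε
  · intro h
    obtain ⟨π, ε, h⟩ := exists_signedPerm_eq h
    exact ⟨π, ε, by rw [signedPermB, h, ← Equiv.permCongr_symm, Equiv.symm_apply_apply]⟩

lemma signedPermB_injective :
    Function.Injective fun p : Perm (Fin n) × (Fin n → ℤˣ) ↦ signedPermB p.1 p.2 :=
  (bsetEquiv n).symm.permCongr.injective.comp signedPerm_injective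

lemma descB_signedPermB (π : Perm (Fin n)) (ε : Fin n → ℤˣ) :
    descB (signedPermB π ε) = descCount ((0 : ℤ) :: List.ofFn (signedWord π ε)) := by
  simp only [descB, signedPermB_posB]

lemma neg_one_pow_negCount_signedPermB (π : Perm (Fin n)) (ε : Fin n → ℤˣ) :
    (-1 : ℤ) ^ negCount (signedPermB π ε) = ∏ i, (ε i : ℤ) := by
  have hsign (i : Fin n) : (ε i : ℤ) = if signedWord π ε i < 0 then -1 else 1 := by
    rcases Int.units_eq_one_or (ε i) with h | h <;> simp [signedWord, h] <;> omega
  simp only [negCount, signedPermB_posB, hsign, Finset.prod_ite, Finset.prod_const,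
    one_pow, mul_one]

noncomputable def signedEulerianPolyB (n : ℕ) : ℤ[X] :=
  ∑ σ ∈ Finset.univ.filter (IsSigned (n := n)), C ((-1 : ℤ) ^ negCount σ) * X ^ descB σ

theorem signedEulerianPolyB_eq_signedDescentPoly (n : ℕ) :
    signedEulerianPolyB n = signedDescentPoly n := by
  rw [signedEulerianPolyB, ← image_signedPermB,
    Finset.sum_image fun _ _ _ _ h ↦ signedPermB_injective h, Fintype.sum_prod_type]
  simp only [descB_signedPermB, neg_one_pow_negCount_signedPermB, signedDescentPoly,
    signedDescentTerm]

end TypeB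

lemma eulerianD_add_eulerianDt (n k : ℕ) : eulerianD n k + eulerianDt n k = eulerianB n k := by
  simp only [eulerianD, eulerianDt, eulerianB, Fintype.card_subtype, Finset.card_filter,
    ← Finset.sum_add_distrib]
  refine Finset.sum_congr rfl fun σ _ ↦ ?_
  by_cases Even (negCount σ) <;> simp [*]

lemma eulerianD_sub_eulerianDt (n k : ℕ) :
    (eulerianD n k : ℤ) - eulerianDt n k = (signedEulerianPolyB n).coeff k := by
  simp only [eulerianD, eulerianDt, signedEulerianPolyB, Fintype.card_subtype, Finset.card_filter,
    finsetSum_coeff, Finset.sum_filter]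
  push_cast
  rw [← Finset.sum_sub_distrib]
  refine Finset.sum_congr rfl fun σ _ ↦ ?_
  rcases Nat.even_or_odd (negCount σ) with h | h <;> by_cases IsSigned σ <;>
    simp [*, h.neg_one_pow, eq_comm]

theorem stmt9_general (n k : ℕ) :
    2 * (eulerianD n k : ℤ) = (eulerianB n k : ℤ) + (-1) ^ k * (n.choose k : ℤ) ∧
    2 * (eulerianDt n k : ℤ) = (eulerianB n k : ℤ) - (-1) ^ k * (n.choose k : ℤ) := by
  have hsum : (eulerianD n k : ℤ) + eulerianDt n k = eulerianB n k := by
    exact_mod_cast eulerianD_add_eulerianDt n k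
  have hdiff : (eulerianD n k : ℤ) - eulerianDt n k = (-1) ^ k * n.choose k := by
    rw [eulerianD_sub_eulerianDt, signedEulerianPolyB_eq_signedDescentPoly, signedDescentPoly_eq,
      coeff_one_sub_X_pow]
  constructor <;> linarith

theorem stmt9 (n k : ℕ) (h : k ≤ n) :
    2 * (eulerianD n k : ℤ) = (eulerianB n k : ℤ) + (-1) ^ k * (n.choose k : ℤ) ∧
    2 * (eulerianDt n k : ℤ) = (eulerianB n k : ℤ) - (-1) ^ k * (n.choose k : ℤ) :=
  stmt9_general n k
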